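/- Let S ∈ ℝ³ with ‖S‖ = 1 and s₁ := ⟨S, e₁⟩ > -1, and let k ∈ ℤ. Define χ ∈ ℂ as the complex number corresponding (under the identification c ↦ (0, Im c, -Re c)) to the vector √2·(-1)^k·(2(S+e₁) - ‖S+e₁‖²·e₁)/√(‖S+e₁‖⁴ + ‖2(S+e₁) - ‖S+e₁‖²·e₁‖²). Then |χ|² = 1 - s₁ (in particular |χ|² < 2), and S = (1-|χ|²)·e₁ + Im(z)·e₂ - Re(z)·e₃ where z = √2·(-1)^k·χ·√(1-|χ|²/2). -/

import Mathlib

open Matrix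

noncomputable section

/-- The standard basis vectors of `ℝ³`. -/
def e1 : Fin 3 → ℝ := ![1, 0, 0]
def e2 : Fin 3 → ℝ := ![0, 1, 0]
def e3 : Fin 3 → ℝ := ![0, 0, 1]

/-- The complex number corresponding to a vector `(0, Im c, -Re c)` of `ℝ³`. -/
def cOfVec (v : Fin 3 → ℝ) : ℂ := { re := -(v 2), im := v 1 }

/-- The stereographic-projection vector
`√2 (-1)^k (2(S+e₁) - ‖S+e₁‖² e₁)/√(‖S+e₁‖⁴ + ‖2(S+e₁) - ‖S+e₁‖² e₁‖²)`. -/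
def chiVec (k : ℤ) (s : Fin 3 → ℝ) : Fin 3 → ℝ :=
  let w : Fin 3 → ℝ := (2 : ℝ) • (s + e1) - ((s + e1) ⬝ᵥ (s + e1)) • e1
  (Real.sqrt 2 * (-1 : ℝ) ^ k / Real.sqrt (((s + e1) ⬝ᵥ (s + e1)) ^ 2 + w ⬝ᵥ w)) • w

/-- The variable `χ` of the Izergin–Korepin discretization. -/
def chi (k : ℤ) (s : Fin 3 → ℝ) : ℂ := cOfVec (chiVec k s)

lemma chi_eval (k : ℤ) (s1 s2 s3 : ℝ) (hs : s1^2 + s2^2 + s3^2 = 1) :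
    chi k ![s1,s2,s3] =
      Complex.mk (-(Real.sqrt 2 * (-1:ℝ)^k / Real.sqrt (8*(1+s1)) * (2*s3)))
        (Real.sqrt 2 * (-1:ℝ)^k / Real.sqrt (8*(1+s1)) * (2*s2)) := by
  have hN : (![s1,s2,s3] + e1) ⬝ᵥ (![s1,s2,s3] + e1) = 2 + 2*s1 := by
    simp [dotProduct, Fin.sum_univ_three, e1]
    nlinarith [hs]
  have hw : (2:ℝ) • (![s1,s2,s3] + e1) - ((2:ℝ) + 2*s1) • e1 = ![0, 2*s2, 2*s3] := by
    funext i; fin_cases i <;> simp [e1] <;> ring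
  have hww : (![0, 2*s2, 2*s3] : Fin 3 → ℝ) ⬝ᵥ ![0, 2*s2, 2*s3] = 4*s2^2 + 4*s3^2 := by
    simp [dotProduct, Fin.sum_univ_three]; ring
  have h8 : (2 + 2*s1)^2 + (4*s2^2 + 4*s3^2) = 8*(1+s1) := by nlinarith [hs]
  simp only [chi, chiVec, hN, hw, hww, h8, cOfVec]
  simp [Complex.ext_iff]

/-- The stereographic projection `χ` of a unit vector `S` satisfies `|χ|² = 1 - ⟨S,e₁⟩`
and can be inverted to recover `S`. -/
theorem chi_inverse_formula (S : Fin 3 → ℝ) (hunit : S ⬝ᵥ S = 1)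
    (hpole : S ⬝ᵥ e1 > -1) (k : ℤ) :
    ‖chi k S‖ ^ 2 = 1 - S ⬝ᵥ e1 ∧
    ‖chi k S‖ ^ 2 < 2 ∧
    S = (1 - ‖chi k S‖ ^ 2) • e1 +
        (((Real.sqrt 2 * (-1 : ℝ) ^ k : ℝ) : ℂ) * chi k S *
          ((Real.sqrt (1 - ‖chi k S‖ ^ 2 / 2) : ℝ) : ℂ)).im • e2 -
        (((Real.sqrt 2 * (-1 : ℝ) ^ k : ℝ) : ℂ) * chi k S *
          ((Real.sqrt (1 - ‖chi k S‖ ^ 2 / 2) : ℝ) : ℂ)).re • e3 := by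
  obtain ⟨s1, s2, s3, rfl⟩ : ∃ a b c, S = ![a,b,c] :=
    ⟨S 0, S 1, S 2, by funext i; fin_cases i <;> rfl⟩
  have hs : s1^2 + s2^2 + s3^2 = 1 := by
    have := hunit; simp [dotProduct, Fin.sum_univ_three] at this; nlinarith [this]
  have he : (![s1,s2,s3] : Fin 3 → ℝ) ⬝ᵥ e1 = s1 := by
    simp [dotProduct, Fin.sum_univ_three, e1]
  have ha : -1 < s1 := by rwa [he] at hpole
  have ha' : (0:ℝ) < 1 + s1 := by linarith
  have hr : (0:ℝ) < Real.sqrt (1+s1) := Real.sqrt_pos.mpr ha'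
  have hr2 : Real.sqrt (1+s1) ^ 2 = 1 + s1 := Real.sq_sqrt ha'.le
  have h2 : (0:ℝ) < Real.sqrt 2 := by positivity
  have h22 : Real.sqrt 2 ^ 2 = 2 := Real.sq_sqrt (by norm_num)
  have h8 : Real.sqrt (8*(1+s1)) = 2 * Real.sqrt 2 * Real.sqrt (1+s1) := by
    rw [Real.sqrt_mul (by norm_num : (0:ℝ) ≤ 8),
      show (8:ℝ) = 2^2*2 by norm_num,
      Real.sqrt_mul (by positivity), Real.sqrt_sq (by norm_num : (0:ℝ) ≤ 2)]
  have hk2 : ((-1:ℝ)^k)^2 = 1 := by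
    rw [sq, ← zpow_add₀ (by norm_num : (-1:ℝ) ≠ 0)]
    exact Even.neg_one_zpow ⟨k, rfl⟩
  have hchi := chi_eval k s1 s2 s3 hs
  have habs : ‖chi k ![s1,s2,s3]‖ ^ 2 = 1 - s1 := by
    rw [Complex.sq_norm, hchi]
    simp only [Complex.normSq_mk, h8]
    field_simp
    linear_combination (s2^2+s3^2)*hk2 + hs - (1-s1)*hr2
  refine ⟨by rw [habs, he], by rw [habs]; linarith, ?_⟩
  have hz : ((Real.sqrt 2 * (-1:ℝ)^k : ℝ):ℂ) * chi k ![s1,s2,s3] *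
      ((Real.sqrt (1+s1) / Real.sqrt 2 : ℝ):ℂ) = Complex.mk (-s3) s2 := by
    rw [hchi]
    simp only [Complex.ext_iff, Complex.mul_re, Complex.mul_im, Complex.ofReal_re,
      Complex.ofReal_im, h8]
    constructor
    · field_simp
      linear_combination (-(Real.sqrt 2*s3*Real.sqrt (1+s1)))*hk2
    · field_simp
      linear_combination (Real.sqrt 2*s2*Real.sqrt (1+s1))*hk2
  have hhalf : Real.sqrt (1 - (1 - s1) / 2) = Real.sqrt (1+s1) / Real.sqrt 2 := by
    rw [show (1:ℝ) - (1-s1)/2 = (1+s1)/2 by ring, Real.sqrt_div ha'.le]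
  rw [habs, hhalf, hz]
  funext i
  fin_cases i <;> simp [e1, e2, e3] <;> ring
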